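/- arXiv:2206.13625 — 4 statements merged into one kernel-verified Lean document; each statement's English description precedes it below -/
import Mathlib

section
/- If nonnegative integers n, m, k satisfy F_n = 10^d F_m + L_k where d is the number of decimal digits of L_k, then m + k - 2 < n < m + k + 8. -/
def lucas : ℕ → ℕ
  | 0 => 2
  | 1 => 1
  | n + 2 => lucas (n + 1) + lucas n

lemma lucas_succ_eq (n : ℕ) : lucas (n + 1) = Nat.fib n + Nat.fib (n + 2) := by
  induction n using Nat.twoStepInduction with
  | zero => rfl
  | one => rfl
  | more n ih1 ih2 =>
    show lucas (n + 2) + lucas (n + 1) = _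
    rw [ih1, ih2]
    have h1 : Nat.fib (n + 2) = Nat.fib n + Nat.fib (n + 1) := Nat.fib_add_two
    have h2 : Nat.fib (n + 1 + 2) = Nat.fib (n + 1) + Nat.fib (n + 2) := by
      rw [Nat.fib_add_two]
    have h3 : Nat.fib (n + 2 + 2) = Nat.fib (n + 2) + Nat.fib (n + 1 + 2) := by
      rw [Nat.fib_add_two]
    omega

lemma lucas_pos (n : ℕ) : 0 < lucas n := by
  cases n with
  | zero => decide
  | succ n =>
    rw [lucas_succ_eq]
    have : 0 < Nat.fib (n + 2) := Nat.fib_pos.mpr (by omega)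
    omega

lemma fib_lt_of_fib_lt {a b : ℕ} (h : Nat.fib a < Nat.fib b) : a < b := by
  by_contra hc
  push_neg at hc
  exact absurd (Nat.fib_mono hc) (by omega)

theorem n_range_fib_lucas (n m k d : ℕ)
    (hd : d = Nat.log 10 (lucas k) + 1)
    (heq : Nat.fib n = 10 ^ d * Nat.fib m + lucas k) :
    (m : ℤ) + k - 2 < n ∧ (n : ℤ) < m + k + 8 := by
  have hLpos : 0 < lucas k := lucas_pos k
  have h1 : 10 ^ (d - 1) ≤ lucas k := by
    rw [hd]
    simpa using Nat.pow_log_le_self 10 hLpos.ne'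
  have h2 : lucas k < 10 ^ d := by
    rw [hd]
    exact Nat.lt_pow_succ_log_self (by norm_num) _
  have h3 : 10 ^ d ≤ 10 * lucas k := by
    have hdd : 10 ^ d = 10 ^ (d - 1) * 10 := by
      rw [hd, Nat.add_sub_cancel, pow_succ]
    rw [hdd, mul_comm]
    exact Nat.mul_le_mul_left _ h1
  have h10 : (10 : ℕ) ≤ 10 ^ d := by
    calc (10:ℕ) = 10 ^ 1 := by norm_num
    _ ≤ 10 ^ d := Nat.pow_le_pow_right (by norm_num) (by omega)
  -- lower bound
  have hlow : m + k < n + 2 := by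
    rcases Nat.eq_zero_or_pos m with hm | hm
    · -- m = 0
      subst hm
      simp only [Nat.fib_zero, mul_zero, zero_add] at heq
      by_contra hc
      push_neg at hc
      have hk : n + 3 ≤ k + 1 := by omega
      have e1 : Nat.fib (n + 3) ≤ Nat.fib (k + 1) := Nat.fib_mono hk
      have e2 : Nat.fib (k + 1) ≤ lucas k := by
        cases k with
        | zero => decide
        | succ b =>
          rw [lucas_succ_eq]
          have r : Nat.fib (b + 1 + 1) = Nat.fib (b + 2) := rfl
          have : Nat.fib (b + 1) ≤ Nat.fib (b + 2) := Nat.fib_mono (by omega)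
          omega
      have e3 : Nat.fib n < Nat.fib (n + 3) := by
        have a1 : Nat.fib n ≤ Nat.fib (n + 2) := Nat.fib_mono (by omega)
        have a2 : 0 < Nat.fib (n + 1) := Nat.fib_pos.mpr (by omega)
        have a3 : Nat.fib (n + 3) = Nat.fib (n + 1) + Nat.fib (n + 2) := by
          rw [Nat.fib_add_two]
        omega
      omega
    · rcases Nat.lt_or_ge k 2 with hk | hk
      · -- m ≥ 1, k ≤ 1
        have hfib : Nat.fib (m + 1) < Nat.fib n := by
          obtain ⟨a, rfl⟩ : ∃ a, m = a + 1 := ⟨m - 1, by omega⟩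
          have e1 : Nat.fib (a + 1 + 1) = Nat.fib a + Nat.fib (a + 1) := Nat.fib_add_two
          have e2 : Nat.fib a ≤ Nat.fib (a + 1) := Nat.fib_mono (by omega)
          have e3 : 10 * Nat.fib (a + 1) ≤ 10 ^ d * Nat.fib (a + 1) :=
            Nat.mul_le_mul_right _ h10
          omega
        have := fib_lt_of_fib_lt hfib
        omega
      · -- m ≥ 1, k ≥ 2
        obtain ⟨a, rfl⟩ : ∃ a, m = a + 1 := ⟨m - 1, by omega⟩
        obtain ⟨b, rfl⟩ : ∃ b, k = b + 2 := ⟨k - 2, by omega⟩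
        have hid : Nat.fib (a + b + 1) = Nat.fib a * Nat.fib b
            + Nat.fib (a + 1) * Nat.fib (b + 1) := Nat.fib_add a b
        have hL : Nat.fib b + Nat.fib (b + 1) ≤ lucas (b + 2) := by
          rw [show b + 2 = (b + 1) + 1 from rfl, lucas_succ_eq]
          have : Nat.fib b ≤ Nat.fib (b + 1 + 2) := Nat.fib_mono (by omega)
          omega
        have e1 : Nat.fib a * Nat.fib b ≤ Nat.fib (a + 1) * Nat.fib b :=
          Nat.mul_le_mul_right _ (Nat.fib_mono (by omega))
        have e2 : lucas (b + 2) * Nat.fib (a + 1) ≤ 10 ^ d * Nat.fib (a + 1) :=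
          Nat.mul_le_mul_right _ (by omega)
        have hfib : Nat.fib (a + b + 1) < Nat.fib n := by
          have : (Nat.fib b + Nat.fib (b + 1)) * Nat.fib (a + 1)
              ≤ lucas (b + 2) * Nat.fib (a + 1) :=
            Nat.mul_le_mul_right _ hL
          nlinarith [hLpos]
        have := fib_lt_of_fib_lt hfib
        omega
  -- upper bound
  have hup : n < m + k + 8 := by
    apply fib_lt_of_fib_lt
    rw [heq]
    cases k with
    | zero =>
      have hid : Nat.fib (m + 8) = Nat.fib m * Nat.fib 7
          + Nat.fib (m + 1) * Nat.fib 8 := Nat.fib_add m 7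
      have e1 : 0 < Nat.fib (m + 1) := Nat.fib_pos.mpr (by omega)
      have e2 : Nat.fib m ≤ Nat.fib (m + 1) := Nat.fib_mono (by omega)
      have e3 : 10 ^ d * Nat.fib m ≤ 20 * Nat.fib m :=
        Nat.mul_le_mul_right _ (by simpa [lucas] using h3)
      simp only [show Nat.fib 7 = 13 from rfl, show Nat.fib 8 = 21 from rfl] at hid
      show 10 ^ d * Nat.fib m + lucas 0 < Nat.fib (m + 0 + 8)
      simp only [Nat.add_zero, lucas]
      omega
    | succ b =>
      have hL2 : lucas (b + 1) ≤ Nat.fib (b + 3) := by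
        rw [lucas_succ_eq]
        have e : Nat.fib (b + 3) = Nat.fib (b + 1) + Nat.fib (b + 2) := by
          rw [Nat.fib_add_two]
        have : Nat.fib b ≤ Nat.fib (b + 1) := Nat.fib_mono (by omega)
        omega
      have hid : Nat.fib (m + (b + 1) + 8) = Nat.fib m * Nat.fib (b + 8)
          + Nat.fib (m + 1) * Nat.fib (b + 9) := by
        have := Nat.fib_add m (b + 8)
        rw [show m + (b + 1) + 8 = m + (b + 8) + 1 by omega] at *
        rw [this]
      have hgrow : 10 * Nat.fib (b + 3) ≤ Nat.fib (b + 8) := by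
        have i1 : Nat.fib (b + 8) = Nat.fib (b + 1) * Nat.fib 6
            + Nat.fib (b + 2) * Nat.fib 7 := by
          have := Nat.fib_add (b + 1) 6
          rw [show b + 1 + 6 + 1 = b + 8 by omega] at this
          rw [this]
        have i2 : Nat.fib (b + 3) = Nat.fib (b + 1) + Nat.fib (b + 2) := by
          rw [Nat.fib_add_two]
        have i3 : Nat.fib (b + 1) ≤ Nat.fib (b + 2) := Nat.fib_mono (by omega)
        simp only [show Nat.fib 6 = 8 from rfl, show Nat.fib 7 = 13 from rfl] at i1
        omega
      have e1 : 10 ^ d * Nat.fib m ≤ Nat.fib (b + 8) * Nat.fib m := by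
        apply Nat.mul_le_mul_right
        calc 10 ^ d ≤ 10 * lucas (b + 1) := h3
        _ ≤ 10 * Nat.fib (b + 3) := by omega
        _ ≤ Nat.fib (b + 8) := hgrow
      have e2 : lucas (b + 1) < Nat.fib (m + 1) * Nat.fib (b + 9) := by
        have f1 : 0 < Nat.fib (m + 1) := Nat.fib_pos.mpr (by omega)
        have f2 : Nat.fib (b + 3) < Nat.fib (b + 9) := by
          have g1 : Nat.fib (b + 3) < Nat.fib (b + 4) :=
            Nat.fib_lt_fib_succ (n := b + 3) (by omega)
          have g2 : Nat.fib (b + 4) ≤ Nat.fib (b + 9) := Nat.fib_mono (by omega)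
          omega
        calc lucas (b + 1) ≤ Nat.fib (b + 3) := hL2
        _ < Nat.fib (b + 9) := f2
        _ ≤ Nat.fib (m + 1) * Nat.fib (b + 9) := Nat.le_mul_of_pos_left _ f1
      calc 10 ^ d * Nat.fib m + lucas (b + 1)
          < Nat.fib (b + 8) * Nat.fib m + Nat.fib (m + 1) * Nat.fib (b + 9) := by omega
      _ = Nat.fib (m + (b + 1) + 8) := by rw [hid]; ring
  constructor <;> omega
end

section
/- If nonnegative integers n, m, k with m ≥ 1 satisfy F_n = 10^d F_m + L_k, where d is the number of decimal digits of L_k, then n - k ≥ 4. -/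
lemma key : ∀ j, Nat.fib (j + 5) ≤ 2 * lucas (j + 2)
  | 0 => by decide
  | 1 => by decide
  | (j + 2) => by
      have h1 : Nat.fib (j + 5) ≤ 2 * lucas (j + 2) := key j
      have h2 : Nat.fib (j + 6) ≤ 2 * lucas (j + 3) := key (j + 1)
      have e1 : lucas (j + 4) = lucas (j + 3) + lucas (j + 2) := rfl
      have e2 : Nat.fib (j + 7) = Nat.fib (j + 6) + Nat.fib (j + 5) := by
        rw [show j + 7 = (j + 5) + 2 by ring, Nat.fib_add_two]; ring
      show Nat.fib (j + 7) ≤ 2 * lucas (j + 4)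
      omega

theorem n_sub_k_ge_four (n m k d : ℕ) (hm : 1 ≤ m)
    (hd : d = Nat.log 10 (lucas k) + 1)
    (heq : Nat.fib n = 10 ^ d * Nat.fib m + lucas k) :
    (4 : ℤ) ≤ (n : ℤ) - k := by
  have h10 : lucas k < 10 ^ d := by
    rw [hd]; exact Nat.lt_pow_succ_log_self (by norm_num) _
  have hfm : 1 ≤ Nat.fib m := Nat.fib_pos.mpr hm
  have hfn : 2 * lucas k + 1 ≤ Nat.fib n := by
    have : 10 ^ d ≤ 10 ^ d * Nat.fib m := Nat.le_mul_of_pos_right _ hfm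
    omega
  have hlt : Nat.fib (k + 3) < Nat.fib n := by
    match k with
    | 0 =>
        have e1 : lucas 0 = 2 := rfl
        have e2 : Nat.fib 3 = 2 := by decide
        show Nat.fib 3 < Nat.fib n
        omega
    | 1 =>
        have hd1 : d = 1 := by simpa [lucas] using hd
        have : (10 : ℕ) ≤ 10 ^ d * Nat.fib m := by
          rw [hd1]; calc (10:ℕ) = 10 * 1 := by norm_num
            _ ≤ 10 ^ 1 * Nat.fib m := by simpa using Nat.mul_le_mul_left 10 hfm
        have e1 : lucas 1 = 1 := rfl
        have e2 : Nat.fib 4 = 3 := by decide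
        show Nat.fib 4 < Nat.fib n
        omega
    | (j + 2) =>
        have h1 : Nat.fib (j + 5) ≤ 2 * lucas (j + 2) := key j
        show Nat.fib (j + 5) < Nat.fib n
        omega
  have hn : k + 3 < n := by
    by_contra h
    exact absurd (Nat.fib_mono (by omega : n ≤ k + 3)) (by omega)
  omega
end

section
/- If nonnegative integers n, m, k, d satisfy F_n = 10^d F_m + L_k with d the number of decimal digits of L_k, m ≥ 1, and n - k ≥ 4, then |1 - 10^d / α^(n-m)| < 3/α^(n-k-7), where α = (1+√5)/2. -/
/-!
Binet's formulas turn `F_n = 10^d F_m + L_k` into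
`α^n - 10^d α^m = β^n - 10^d β^m + √5 L_k`. Dividing by `α^n` gives
`|1 - 10^d / α^(n-m)| ≤ (1 + 10^d + √5 L_k) / α^n`, and since `|β| < 1`, `10^d ≤ 10 L_k`,
`L_k ≤ 2 α^k` and `2 (11 + √5) < 3 α^7`, the numerator is below `3 α^(k+7)`.
-/

noncomputable def goldenRatio' : ℝ := (1 + Real.sqrt 5) / 2

open Real goldenRatio

lemma goldenRatio'_eq_goldenRatio : goldenRatio' = φ := rfl

lemma coe_lucas_eq : ∀ k, (lucas k : ℝ) = φ ^ k + ψ ^ k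
  | 0 => by norm_num [lucas]
  | 1 => by simp [lucas, goldenRatio_add_goldenConj]
  | k + 2 => by
    rw [lucas]
    push_cast
    rw [coe_lucas_eq (k + 1), coe_lucas_eq k]
    linear_combination (-(φ ^ k)) * goldenRatio_sq + (-(ψ ^ k)) * goldenConj_sq

lemma one_le_lucas : ∀ k, 1 ≤ lucas k
  | 0 => by norm_num [lucas]
  | 1 => le_rfl
  | k + 2 => le_add_right (one_le_lucas (k + 1))

lemma abs_goldenConj_pow_le_one (n : ℕ) : |ψ ^ n| ≤ 1 := by
  rw [abs_pow]
  refine pow_le_one₀ (abs_nonneg _) (abs_le.2 ⟨neg_one_lt_goldenConj.le, ?_⟩)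
  linarith [goldenConj_neg]

lemma coe_lucas_le_two_mul_goldenRatio_pow (k : ℕ) : (lucas k : ℝ) ≤ 2 * φ ^ k := by
  rw [coe_lucas_eq]
  have hφk : 1 ≤ φ ^ k := one_le_pow₀ one_lt_goldenRatio.le
  linarith [le_of_abs_le (abs_goldenConj_pow_le_one k)]

lemma goldenRatio_pow_seven : φ ^ 7 = 13 * φ + 8 := by
  linear_combination (φ ^ 5 + φ ^ 4 + 2 * φ ^ 3 + 3 * φ ^ 2 + 5 * φ + 8) * goldenRatio_sq

theorem Nat.pow_succ_log_le_mul_self (b : ℕ) {x : ℕ} (hx : x ≠ 0) :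
    b ^ (Nat.log b x + 1) ≤ b * x := by
  rw [pow_succ, mul_comm]
  exact Nat.mul_le_mul_left b (Nat.pow_log_le_self b hx)

lemma goldenRatio_pow_sub_mul_eq_of_fib_eq {n m : ℕ} {c L : ℝ}
    (h : (Nat.fib n : ℝ) = c * Nat.fib m + L) :
    φ ^ n - c * φ ^ m = ψ ^ n - c * ψ ^ m + √5 * L := by
  have hs : √5 ≠ 0 := by positivity
  rw [coe_fib_eq, coe_fib_eq] at h
  field_simp at h
  linear_combination h

lemma abs_goldenRatio_pow_sub_mul_le_of_fib_eq {n m : ℕ} {c L : ℝ}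
    (h : (Nat.fib n : ℝ) = c * Nat.fib m + L) :
    |φ ^ n - c * φ ^ m| ≤ 1 + |c| + √5 * |L| := by
  rw [goldenRatio_pow_sub_mul_eq_of_fib_eq h]
  calc |ψ ^ n - c * ψ ^ m + √5 * L| ≤ |ψ ^ n| + |c| * |ψ ^ m| + √5 * |L| := by
        grw [abs_add_le, abs_sub, abs_mul, abs_mul, abs_of_nonneg (Real.sqrt_nonneg 5)]
    _ ≤ 1 + |c| * 1 + √5 * |L| := by
        gcongr <;> exact abs_goldenConj_pow_le_one _
    _ = 1 + |c| + √5 * |L| := by ring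

lemma one_sub_div_goldenRatio_zpow_sub (c : ℝ) (n m : ℕ) :
    1 - c / φ ^ ((n : ℤ) - m) = (φ ^ n - c * φ ^ m) / φ ^ n := by
  rw [zpow_sub₀ goldenRatio_ne_zero, zpow_natCast, zpow_natCast]
  field_simp

lemma div_goldenRatio_zpow_sub_sub (c : ℝ) (n k j : ℕ) :
    c / φ ^ ((n : ℤ) - k - j) = c * φ ^ (k + j) / φ ^ n := by
  rw [sub_sub, ← Nat.cast_add, zpow_sub₀ goldenRatio_ne_zero, zpow_natCast, zpow_natCast]
  field_simp

theorem linear_form_bound_general (n m k d : ℕ)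
    (hd : d = Nat.log 10 (lucas k) + 1)
    (heq : Nat.fib n = 10 ^ d * Nat.fib m + lucas k) :
    |1 - (10 : ℝ) ^ d / goldenRatio' ^ ((n : ℤ) - m)| <
      3 / goldenRatio' ^ ((n : ℤ) - k - 7) := by
  have hL : (1 : ℝ) ≤ lucas k := by exact_mod_cast one_le_lucas k
  have hten : (10 : ℝ) ^ d ≤ 10 * lucas k := by
    rw [hd]
    exact_mod_cast Nat.pow_succ_log_le_mul_self 10 (Nat.one_le_iff_ne_zero.1 (one_le_lucas k))
  have hbound := abs_goldenRatio_pow_sub_mul_le_of_fib_eq (c := (10 : ℝ) ^ d) (L := lucas k)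
    (by exact_mod_cast heq)
  rw [abs_of_pos (by positivity : (0 : ℝ) < 10 ^ d), Nat.abs_cast] at hbound
  rw [goldenRatio'_eq_goldenRatio, one_sub_div_goldenRatio_zpow_sub,
    show (n : ℤ) - k - 7 = n - k - (7 : ℕ) by norm_num, div_goldenRatio_zpow_sub_sub, abs_div,
    abs_of_pos (pow_pos goldenRatio_pos n), div_lt_div_iff_of_pos_right (pow_pos goldenRatio_pos n)]
  have hsqrt : √5 < 3 := by
    rw [Real.sqrt_lt' (by norm_num)]
    norm_num
  calc |φ ^ n - 10 ^ d * φ ^ m| ≤ (11 + √5) * lucas k := by nlinarith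
    _ ≤ (11 + √5) * (2 * φ ^ k) := by gcongr; exact coe_lucas_le_two_mul_goldenRatio_pow k
    _ < 3 * (13 * φ + 8) * φ ^ k := by
        rw [← mul_assoc]
        exact mul_lt_mul_of_pos_right (by linarith [one_lt_goldenRatio]) (pow_pos goldenRatio_pos k)
    _ = 3 * φ ^ (k + 7) := by rw [pow_add, goldenRatio_pow_seven]; ring

theorem linear_form_bound (n m k d : ℕ) (hm : 1 ≤ m)
    (hd : d = Nat.log 10 (lucas k) + 1)
    (heq : Nat.fib n = 10 ^ d * Nat.fib m + lucas k)
    (hnk : (4 : ℤ) ≤ (n : ℤ) - k) :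
    |1 - (10 : ℝ) ^ d / goldenRatio' ^ ((n : ℤ) - m)| <
      3 / goldenRatio' ^ ((n : ℤ) - k - 7) :=
  linear_form_bound_general n m k d hd heq
end

section
/- Let M be a positive integer, γ an irrational real, p/q a convergent of the continued fraction of γ with q > 6M, and let A > 0, B > 1, μ be reals. If ε := ‖μq‖ − M‖γq‖ > 0 (where ‖x‖ denotes the distance from x to the nearest integer), then there is no solution to 0 < |uγ − v + μ| < A·B^(−w) in positive integers u, v, w with u ≤ M and w ≥ log(Aq/ε)/log B. -/
/-- Distance from a real number to the nearest integer. -/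
noncomputable def nearestIntDist (x : ℝ) : ℝ := |x - round x|

lemma nearestIntDist_le (x : ℝ) (n : ℤ) : nearestIntDist x ≤ |x - n| := by
  unfold nearestIntDist
  rcases eq_or_ne n (round x) with rfl | h
  · simp
  · have h1 : (1 : ℝ) ≤ |(round x : ℝ) - n| := by
      have : round x - n ≠ 0 := sub_ne_zero.mpr (Ne.symm h)
      have := Int.one_le_abs this
      exact_mod_cast this
    have h2 : |x - round x| ≤ 1 / 2 := abs_sub_round x
    have h3 : |(round x : ℝ) - n| ≤ |x - round x| + |x - n| := by
      calc |(round x : ℝ) - n| = |(round x - x) + (x - n)| := by ring_nf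
        _ ≤ |round x - x| + |x - n| := abs_add_le _ _
        _ = |x - round x| + |x - n| := by rw [abs_sub_comm]
    linarith

/-- Baker–Davenport reduction lemma (Dujella–Pethő version). -/
theorem baker_davenport_reduction (M : ℕ) (hM : 0 < M) (γ : ℝ) (hγ : Irrational γ)
    (p : ℤ) (q : ℕ) (hq : 0 < q)
    (hconv : ∃ i : ℕ, (GenContFract.of γ).convs i = (p : ℝ) / q)
    (hq6 : 6 * M < q) (A B μ ε : ℝ) (hA : 0 < A) (hB : 1 < B)
    (hε : ε = nearestIntDist (μ * q) - M * nearestIntDist (γ * q)) (hεpos : 0 < ε) :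
    ¬ ∃ u v w : ℕ, 0 < u ∧ 0 < v ∧ 0 < w ∧ u ≤ M ∧
        Real.log (A * q / ε) / Real.log B ≤ (w : ℝ) ∧
        0 < |(u : ℝ) * γ - v + μ| ∧ |(u : ℝ) * γ - v + μ| < A * B ^ (-(w : ℤ)) := by
  rintro ⟨u, v, w, hu, hv, hw, huM, hwlog, hpos, hlt⟩
  have hq0 : (0 : ℝ) < q := by exact_mod_cast hq
  have hB0 : (0 : ℝ) < B := lt_trans one_pos hB
  have hlogB : 0 < Real.log B := Real.log_pos hB
  -- from hwlog : A*q/ε ≤ B^w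
  have hAqε : 0 < A * q / ε := div_pos (mul_pos hA hq0) hεpos
  have hBw : A * q / ε ≤ B ^ w := by
    have h1 : Real.log (A * q / ε) ≤ w * Real.log B := by
      have := (div_le_iff₀ hlogB).mp hwlog
      linarith
    calc A * q / ε = Real.exp (Real.log (A * q / ε)) := (Real.exp_log hAqε).symm
      _ ≤ Real.exp (w * Real.log B) := Real.exp_le_exp.mpr h1
      _ = B ^ w := by
          rw [← Real.log_pow, Real.exp_log (pow_pos hB0 w)]
  have hABw : A * q * B ^ (-(w : ℤ)) ≤ ε := by
    have hBwpos : (0 : ℝ) < B ^ w := pow_pos hB0 w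
    have : A * q ≤ ε * B ^ w := by
      rw [div_le_iff₀ hεpos] at hBw; linarith
    rw [zpow_neg, zpow_natCast, mul_inv_le_iff₀ hBwpos]
    linarith
  -- key estimate
  set X : ℝ := ((u : ℝ) * γ - v + μ) * q with hX
  have hXlt : |X| < A * q * B ^ (-(w : ℤ)) := by
    rw [hX, abs_mul, abs_of_pos hq0]
    calc |(u : ℝ) * γ - v + μ| * q < (A * B ^ (-(w : ℤ))) * q := by
          exact mul_lt_mul_of_pos_right hlt hq0
      _ = A * q * B ^ (-(w : ℤ)) := by ring
  have hkey : nearestIntDist (μ * q) ≤ |X| + M * nearestIntDist (γ * q) := by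
    have h1 := nearestIntDist_le (μ * q) ((v : ℤ) * q - u * round (γ * q))
    have h2 : μ * q - (((v : ℤ) * q - u * round (γ * q) : ℤ) : ℝ)
        = X - (u : ℝ) * (γ * q - round (γ * q)) := by
      push_cast
      rw [hX]; ring
    have h3 : |X - (u : ℝ) * (γ * q - round (γ * q))|
        ≤ |X| + (u : ℝ) * nearestIntDist (γ * q) := by
      calc |X - (u : ℝ) * (γ * q - round (γ * q))|
          ≤ |X| + |(u : ℝ) * (γ * q - round (γ * q))| := abs_sub _ _
        _ = |X| + (u : ℝ) * nearestIntDist (γ * q) := by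
            congr 1
            rw [abs_mul, Nat.abs_cast]
            rfl
    have h4 : (u : ℝ) * nearestIntDist (γ * q) ≤ M * nearestIntDist (γ * q) := by
      apply mul_le_mul_of_nonneg_right _ (abs_nonneg _)
      exact_mod_cast huM
    calc nearestIntDist (μ * q) ≤ |X - (u : ℝ) * (γ * q - round (γ * q))| := by
          rw [← h2]; exact h1
      _ ≤ |X| + (u : ℝ) * nearestIntDist (γ * q) := h3
      _ ≤ |X| + M * nearestIntDist (γ * q) := by linarith
  linarith [hkey, hXlt, hABw]
end
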